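/- Let K be a group and let H be a subgroup of K contained in the hypercentre of K. If K has property (χ) with respect to H (that is, Hom(K/H^K, Z(H)) = 0), then the normal closure N = H^K also has property (χ) with respect to H (that is, Hom(N/H^N, Z(H)) = 0). -/

import Mathlib

/-!
For `F : N →* A` with `A` abelian and `K ⧸ N` admitting no nontrivial homomorphism to `A`,
`F` is invariant under conjugation by `K` at every element of `N ∩ Z_α(K)`, by transfinite
induction on `α`: if `n ∈ Z_{α+1}(K)`, all commutators `⁅k, n⁆` lie in `N ∩ Z_α(K)`, so
`k ↦ F ⁅k, n⁆` is a homomorphism on `K` vanishing on `N`, hence trivial. Apply this with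
`N = H^K ≤ hypercenter K` and `F` the composite `N → N/H^N → Z(H)`: then `ker F` is normal in
`K` and contains `H`, so it contains `H^K`, i.e. `F = 1`.
-/

universe u

theorem Subgroup.normal_iSup_of_normal {G : Type u} [Group G] {ι : Sort*}
    (f : ι → Subgroup G) (h : ∀ i, (f i).Normal) : (⨆ i, f i).Normal := by
  constructor
  intro x hx g
  refine Subgroup.iSup_induction (C := fun y => g * y * g⁻¹ ∈ ⨆ i, f i) f hx
    (fun i y hy => le_iSup f i ((h i).conj_mem y hy g)) (by simpa using Subgroup.one_mem _) ?_
  intro a b ha hb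
  have hab : g * (a * b) * g⁻¹ = (g * a * g⁻¹) * (g * b * g⁻¹) := by group
  rw [hab]; exact mul_mem ha hb

/-- The transfinite upper central series of a group, as ordinal-indexed normal subgroups. -/
noncomputable def transUpperCentralSeriesAux (G : Type u) [Group G] :
    Ordinal.{u} → {H : Subgroup G // H.Normal} := fun o =>
  Ordinal.limitRecOn o
    ⟨⊥, inferInstance⟩
    (fun _ Z => ⟨@Subgroup.upperCentralSeriesStep G _ Z.1 Z.2, by
      haveI := Z.2; rw [Subgroup.upperCentralSeriesStep_eq_comap_center]
      exact Subgroup.Normal.comap inferInstance _⟩)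
    (fun o _ ih => ⟨⨆ (o' : Ordinal.{u}) (ho' : o' < o), (ih o' ho').1,
      Subgroup.normal_iSup_of_normal _ fun o' =>
        Subgroup.normal_iSup_of_normal _ fun ho' => (ih o' ho').2⟩)

/-- The transfinite upper central series. -/
noncomputable def transUpperCentralSeries (G : Type u) [Group G] (o : Ordinal.{u}) :
    Subgroup G := (transUpperCentralSeriesAux G o).1

/-- The hypercentre of a group: the union of the transfinite upper central series. -/
noncomputable def hypercenter (G : Type u) [Group G] : Subgroup G :=
  ⨆ o : Ordinal.{u}, transUpperCentralSeries G o

/-- A group is hypercentral if it equals the union of its transfinite upper central series. -/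
def IsHypercentral (G : Type u) [Group G] : Prop := hypercenter G = ⊤

/-- The hypercentral length: the least ordinal `o` with `Z_o(G) = G`. -/
noncomputable def hypercentralLength (G : Type u) [Group G] : Ordinal.{u} :=
  sInf {o : Ordinal.{u} | transUpperCentralSeries G o = ⊤}

/-- A group is locally nilpotent if every finitely generated subgroup is nilpotent. -/
def IsLocallyNilpotent (G : Type*) [Group G] : Prop :=
  ∀ S : Subgroup G, S.FG → Group.IsNilpotent S

theorem Subgroup.le_upperCentralSeriesStep {G : Type*} [Group G] (N : Subgroup G) [hN : N.Normal] :
    N ≤ upperCentralSeriesStep N := fun x hx y => by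
  rw [commutatorElement_def, mul_assoc, mul_assoc]
  exact mul_mem hx (by simpa [mul_assoc] using hN.conj_mem _ (inv_mem hx) y)

section TransUpperCentralSeries

variable {G : Type u} [Group G]

instance transUpperCentralSeries.normal (o : Ordinal.{u}) :
    (transUpperCentralSeries G o).Normal :=
  (transUpperCentralSeriesAux G o).2

theorem transUpperCentralSeries_zero : transUpperCentralSeries G 0 = ⊥ := by
  simp [transUpperCentralSeries, transUpperCentralSeriesAux]

theorem transUpperCentralSeries_add_one (o : Ordinal.{u}) :
    transUpperCentralSeries G (o + 1) =
      Subgroup.upperCentralSeriesStep (transUpperCentralSeries G o) := by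
  simp [transUpperCentralSeries, transUpperCentralSeriesAux]

theorem transUpperCentralSeries_of_isSuccLimit {o : Ordinal.{u}} (ho : Order.IsSuccLimit o) :
    transUpperCentralSeries G o = ⨆ (β : Ordinal.{u}) (_ : β < o), transUpperCentralSeries G β := by
  simp [transUpperCentralSeries, transUpperCentralSeriesAux, Ordinal.limitRecOn_limit _ _ _ _ ho]

theorem transUpperCentralSeries_mono : Monotone (transUpperCentralSeries G) := by
  intro β γ hβγ
  induction γ using Ordinal.limitRecOn with
  | zero => rw [nonpos_iff_eq_zero.1 hβγ]
  | add_one γ ih =>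
    rcases (Order.le_succ_iff_eq_or_le.1 (Order.succ_eq_add_one γ ▸ hβγ)) with rfl | hβγ
    · exact le_rfl
    · rw [transUpperCentralSeries_add_one]
      exact (ih hβγ).trans (Subgroup.le_upperCentralSeriesStep _)
  | limit γ hγ ih =>
    rcases hβγ.lt_or_eq with hβγ | rfl
    · rw [transUpperCentralSeries_of_isSuccLimit hγ]
      exact le_iSup₂_of_le β hβγ le_rfl
    · exact le_rfl

theorem exists_lt_of_mem_transUpperCentralSeries {o : Ordinal.{u}} (ho : Order.IsSuccLimit o)
    {x : G} (hx : x ∈ transUpperCentralSeries G o) :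
    ∃ β < o, x ∈ transUpperCentralSeries G β := by
  rw [transUpperCentralSeries_of_isSuccLimit ho] at hx
  refine (Subgroup.mem_biSup_of_directedOn (p := (· < o)) (i := 0) ho.pos ?_).1 hx
  intro β hβ γ hγ
  exact ⟨max β γ, show max β γ < o from max_lt hβ hγ,
    transUpperCentralSeries_mono (le_max_left β γ), transUpperCentralSeries_mono (le_max_right β γ)⟩

instance hypercenter.normal : (hypercenter G).Normal :=
  Subgroup.normal_iSup_of_normal _ transUpperCentralSeries.normal

theorem hypercenter_induction {P : G → Prop} (one : P 1)
    (add_one : ∀ o, (∀ y ∈ transUpperCentralSeries G o, P y) →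
      ∀ x ∈ transUpperCentralSeries G (o + 1), P x)
    {x : G} (hx : x ∈ hypercenter G) : P x := by
  obtain ⟨o, hxo⟩ := (Subgroup.mem_iSup_of_directed transUpperCentralSeries_mono.directed_le).1 hx
  clear hx
  induction o using Ordinal.limitRecOn generalizing x with
  | zero =>
    rw [transUpperCentralSeries_zero, Subgroup.mem_bot] at hxo
    exact hxo ▸ one
  | add_one o ih => exact add_one o (fun _ => ih) x hxo
  | limit o ho ih =>
    obtain ⟨β, hβ, hxβ⟩ := exists_lt_of_mem_transUpperCentralSeries ho hxo
    exact ih β hβ hxβ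

end TransUpperCentralSeries

section NormalSubgroup

variable {K : Type*} [Group K]

theorem eq_one_of_map_conjNormal_eq {A : Type*} [MulOneClass A] {s : Set K}
    (F : Subgroup.normalClosure s →* A) (hF : ∀ (k : K) n, F (MulAut.conjNormal k n) = F n)
    (hs : ∀ n : Subgroup.normalClosure s, (n : K) ∈ s → F n = 1) : F = 1 := by
  let D : Subgroup K := F.ker.map (Subgroup.normalClosure s).subtype
  have hD : D.Normal := by
    refine ⟨fun x hx k => ?_⟩
    obtain ⟨n, hn, rfl⟩ := Subgroup.mem_map.1 hx
    refine Subgroup.mem_map.2 ⟨MulAut.conjNormal k n, ?_, MulAut.conjNormal_apply k n⟩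
    rw [MonoidHom.mem_ker, hF, ← MonoidHom.mem_ker]
    exact hn
  have hsD : Subgroup.normalClosure s ≤ D :=
    Subgroup.normalClosure_le_normal fun x hx =>
      Subgroup.mem_map.2 ⟨⟨x, Subgroup.subset_normalClosure hx⟩, hs _ hx, rfl⟩
  ext n
  obtain ⟨m, hm, hmn⟩ := Subgroup.mem_map.1 (hsD n.2)
  rw [← Subtype.ext hmn]
  exact hm

open scoped commutatorElement in
/-- `k ↦ F ⁅k, n⁆` is a homomorphism `K →* A` vanishing on `N`, hence trivial by `hχ`. -/
theorem map_conjNormal_eq_of_forall_commutator {N : Subgroup K} [N.Normal] {A : Type*}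
    [CommGroup A] (F : N →* A) (hχ : ∀ f : K ⧸ N →* A, f = 1) (n : N)
    (hcomm : ∀ k k' : K, F (MulAut.conjNormal k' (MulAut.conjNormal k n * n⁻¹)) =
      F (MulAut.conjNormal k n * n⁻¹))
    (k : K) : F (MulAut.conjNormal k n) = F n := by
  let g : K →* A := MonoidHom.mk' (fun k => F (MulAut.conjNormal k n * n⁻¹)) fun k₁ k₂ => by
    have : MulAut.conjNormal (k₁ * k₂) n * n⁻¹ =
        MulAut.conjNormal k₁ (MulAut.conjNormal k₂ n * n⁻¹) * (MulAut.conjNormal k₁ n * n⁻¹) :=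
      Subtype.ext <| by
        simp only [Subgroup.coe_mul, MulAut.conjNormal_apply, Subgroup.coe_inv]
        group
    rw [this, map_mul, hcomm, mul_comm]
  have hgN : N ≤ g.ker := fun m hm => by
    have : MulAut.conjNormal m n * n⁻¹ = ⁅(⟨m, hm⟩ : N), n⁆ :=
      Subtype.ext (by simp [MulAut.conjNormal_apply, commutatorElement_def])
    rw [MonoidHom.mem_ker, MonoidHom.mk'_apply, this, map_commutatorElement,
      commutatorElement_eq_one_iff_mul_comm, mul_comm]
  have : g k = 1 := by
    simpa using DFunLike.congr_fun (hχ (QuotientGroup.lift N g hgN)) (k : K ⧸ N)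
  simpa [g, mul_inv_eq_one] using this

end NormalSubgroup

theorem map_conjNormal_eq_of_mem_hypercenter {K : Type u} [Group K] {N : Subgroup K} [N.Normal]
    {A : Type*} [CommGroup A] (F : N →* A) (hχ : ∀ f : K ⧸ N →* A, f = 1) {n : N}
    (hn : (n : K) ∈ hypercenter K) (k : K) :
    F (MulAut.conjNormal k n) = F n := by
  refine hypercenter_induction
    (P := fun x => ∀ n : N, (n : K) = x → ∀ k : K, F (MulAut.conjNormal k n) = F n)
    ?_ ?_ hn n rfl k
  · rintro n hn_one k
    rw [Subtype.ext (hn_one.trans (Subgroup.coe_one N).symm), map_one]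
  · rintro o ih _ hx n rfl
    refine map_conjNormal_eq_of_forall_commutator F hχ n fun k => ih _ ?_ _ rfl
    rw [transUpperCentralSeries_add_one] at hx
    have := inv_mem ((Subgroup.mem_upperCentralSeriesStep _ _).1 hx k)
    rw [commutatorElement_inv, commutatorElement_def] at this
    simpa [MulAut.conjNormal_apply] using this

/-- Let `K` be a group and `H ≤ K` contained in the hypercentre of `K`.  If `K` has
property (χ) with respect to `H` (i.e. `Hom(K/H^K, Z(H)) = 0`), then the normal closure
`N = H^K` also has property (χ) with respect to `H` (i.e. `Hom(N/H^N, Z(H)) = 0`). -/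
theorem chi_of_normalClosure {K : Type u} [Group K] (H : Subgroup K)
    (hhyp : H ≤ hypercenter K)
    (hchi : ∀ f : (K ⧸ Subgroup.normalClosure (H : Set K)) →* Subgroup.center H, f = 1) :
    ∀ f : ((Subgroup.normalClosure (H : Set K)) ⧸
        Subgroup.normalClosure
          ((H.subgroupOf (Subgroup.normalClosure (H : Set K)) :
            Subgroup (Subgroup.normalClosure (H : Set K))) :
              Set (Subgroup.normalClosure (H : Set K)))) →*
      Subgroup.center H, f = 1 := by
  intro f
  have hN : Subgroup.normalClosure (H : Set K) ≤ hypercenter K :=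
    Subgroup.normalClosure_le_normal hhyp
  -- the `CommGroup` structure on `Subgroup.center H` is a scoped instance
  open scoped IsMulCommutative in
  refine QuotientGroup.monoidHom_ext _ (eq_one_of_map_conjNormal_eq _
    (fun k n => map_conjNormal_eq_of_mem_hypercenter _ hchi (hN n.2) k) fun n hn => ?_)
  rw [MonoidHom.comp_apply, QuotientGroup.mk'_apply, (QuotientGroup.eq_one_iff _).2, map_one]
  exact Subgroup.subset_normalClosure (Subgroup.mem_subgroupOf.2 hn)
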